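/- If there exists a Hermitian X_T with R_{X_T} invertible and ρ(T̂_{X_T}) < 1, then the set S_≥ := {X Hermitian : ∃ such X_T, C_{T_{X_T}}(X) ≥ H_{X_T}} is nonempty; indeed, for any such X_T the equation C_{T_{X_T}}(X) = H_{X_T} has a (unique) Hermitian solution X, which lies in S_≥. -/

import Mathlib

/-! Substituting `Y = Cᴴ Ȳ C` into itself removes the conjugation: `Y = Ĉᴴ Y Ĉ`, hence
`Y = (Ĉ ^ k)ᴴ Y Ĉ ^ k → 0` because `ρ(Ĉ) < 1` forces `Ĉ ^ k → 0` (Gelfand's formula). So the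
`ℝ`-linear operator `C_C` is injective, hence bijective on the finite-dimensional space of matrices.
Since `C_C` commutes with `ᴴ` and `H_X` is Hermitian, the solution of `C_C(X) = H_X` is Hermitian,
and it lies in `S_≥` with equality. -/

open Matrix Filter Topology
open scoped ComplexOrder

noncomputable section

namespace CDARE

variable {n m : ℕ}

/-- Entrywise complex conjugate of a matrix. -/
def mconj {p q : ℕ} (M : Matrix (Fin p) (Fin q) ℂ) : Matrix (Fin p) (Fin q) ℂ :=
  M.map (starRingEnd ℂ)

/-- `hatM M = conj M * M`. -/
def hatM (M : Matrix (Fin n) (Fin n) ℂ) : Matrix (Fin n) (Fin n) ℂ := mconj M * M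

/-- `R_X = R + Bᴴ X̄ B`. -/
def RX (R : Matrix (Fin m) (Fin m) ℂ) (B : Matrix (Fin n) (Fin m) ℂ)
    (X : Matrix (Fin n) (Fin n) ℂ) : Matrix (Fin m) (Fin m) ℂ :=
  R + Bᴴ * mconj X * B

/-- `F_X = R_X⁻¹ Bᴴ X̄ A`. -/
def FX (A : Matrix (Fin n) (Fin n) ℂ) (B : Matrix (Fin n) (Fin m) ℂ)
    (R : Matrix (Fin m) (Fin m) ℂ) (X : Matrix (Fin n) (Fin n) ℂ) :
    Matrix (Fin m) (Fin n) ℂ :=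
  (RX R B X)⁻¹ * (Bᴴ * mconj X * A)

/-- `T_X = A - B F_X`. -/
def TX (A : Matrix (Fin n) (Fin n) ℂ) (B : Matrix (Fin n) (Fin m) ℂ)
    (R : Matrix (Fin m) (Fin m) ℂ) (X : Matrix (Fin n) (Fin n) ℂ) :
    Matrix (Fin n) (Fin n) ℂ :=
  A - B * FX A B R X

/-- The Riccati operator `R(X)`. -/
def Rop (A : Matrix (Fin n) (Fin n) ℂ) (B : Matrix (Fin n) (Fin m) ℂ)
    (R : Matrix (Fin m) (Fin m) ℂ) (H : Matrix (Fin n) (Fin n) ℂ)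
    (X : Matrix (Fin n) (Fin n) ℂ) : Matrix (Fin n) (Fin n) ℂ :=
  Aᴴ * mconj X * A - Aᴴ * mconj X * B * (RX R B X)⁻¹ * (Bᴴ * mconj X * A) + H

/-- `H_X = H + F_Xᴴ R F_X`. -/
def HX (A : Matrix (Fin n) (Fin n) ℂ) (B : Matrix (Fin n) (Fin m) ℂ)
    (R : Matrix (Fin m) (Fin m) ℂ) (H : Matrix (Fin n) (Fin n) ℂ)
    (X : Matrix (Fin n) (Fin n) ℂ) : Matrix (Fin n) (Fin n) ℂ :=
  H + (FX A B R X)ᴴ * R * FX A B R X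

/-- `K(Y, X) = (F_Y - F_X)ᴴ R_X (F_Y - F_X)`. -/
def Kop (A : Matrix (Fin n) (Fin n) ℂ) (B : Matrix (Fin n) (Fin m) ℂ)
    (R : Matrix (Fin m) (Fin m) ℂ) (Y X : Matrix (Fin n) (Fin n) ℂ) :
    Matrix (Fin n) (Fin n) ℂ :=
  (FX A B R Y - FX A B R X)ᴴ * RX R B X * (FX A B R Y - FX A B R X)

/-- Conjugate Stein operator `C_C(X) = X - Cᴴ X̄ C`. -/
def CStein (C X : Matrix (Fin n) (Fin n) ℂ) : Matrix (Fin n) (Fin n) ℂ :=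
  X - Cᴴ * mconj X * C

/-- The set `S_≥`. -/
def Sge (A : Matrix (Fin n) (Fin n) ℂ) (B : Matrix (Fin n) (Fin m) ℂ)
    (R : Matrix (Fin m) (Fin m) ℂ) (H : Matrix (Fin n) (Fin n) ℂ) :
    Set (Matrix (Fin n) (Fin n) ℂ) :=
  {X | X.IsHermitian ∧ ∃ XT : Matrix (Fin n) (Fin n) ℂ, XT.IsHermitian ∧
      IsUnit (RX R B XT) ∧ spectralRadius ℂ (hatM (TX A B R XT)) < 1 ∧
      (CStein (TX A B R XT) X - HX A B R H XT).PosSemidef}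

lemma mconj_mul {p q r : ℕ} (M : Matrix (Fin p) (Fin q) ℂ) (N : Matrix (Fin q) (Fin r) ℂ) :
    mconj (M * N) = mconj M * mconj N :=
  Matrix.map_mul

lemma mconj_mconj {p q : ℕ} (M : Matrix (Fin p) (Fin q) ℂ) : mconj (mconj M) = M := by
  ext; simp [mconj]

lemma mconj_conjTranspose {p q : ℕ} (M : Matrix (Fin p) (Fin q) ℂ) :
    mconj Mᴴ = (mconj M)ᴴ := by
  ext; simp [mconj]

lemma mconj_add {p q : ℕ} (M N : Matrix (Fin p) (Fin q) ℂ) :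
    mconj (M + N) = mconj M + mconj N := by
  ext; simp [mconj]

lemma mconj_real_smul {p q : ℕ} (r : ℝ) (M : Matrix (Fin p) (Fin q) ℂ) :
    mconj (r • M) = r • mconj M := by
  ext; simp [mconj, Complex.real_smul]

theorem _root_.tendsto_pow_atTop_nhds_zero_of_spectralRadius_lt_one {𝔸 : Type*} [NormedRing 𝔸]
    [NormedAlgebra ℂ 𝔸] [CompleteSpace 𝔸] {a : 𝔸} (h : spectralRadius ℂ a < 1) :
    Tendsto (a ^ ·) atTop (𝓝 0) := by
  obtain ⟨r, hρr, hr1⟩ := ENNReal.lt_iff_exists_nnreal_btwn.mp h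
  have hgelfand := spectrum.pow_nnnorm_pow_one_div_tendsto_nhds_spectralRadius a
  have hbound : ∀ᶠ k : ℕ in atTop, ‖a ^ k‖ ≤ (r : ℝ) ^ k := by
    filter_upwards [hgelfand.eventually_lt_const hρr, eventually_ne_atTop 0] with k hk hk0
    have := ENNReal.rpow_le_rpow hk.le (Nat.cast_nonneg k)
    rw [← ENNReal.rpow_mul, one_div, inv_mul_cancel₀ (Nat.cast_ne_zero.mpr hk0), ENNReal.rpow_one,
      ENNReal.rpow_natCast] at this
    exact_mod_cast this
  exact squeeze_zero_norm' hbound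
    (tendsto_pow_atTop_nhds_zero_of_lt_one r.coe_nonneg (by exact_mod_cast hr1))

theorem _root_.Matrix.tendsto_pow_atTop_nhds_zero_of_spectralRadius_lt_one {ι : Type*}
    [Fintype ι] [DecidableEq ι] {M : Matrix ι ι ℂ} (h : spectralRadius ℂ M < 1) :
    Tendsto (M ^ ·) atTop (𝓝 0) := by
  let := Matrix.linftyOpNormedRing (n := ι) (α := ℂ)
  let := Matrix.linftyOpNormedAlgebra (n := ι) (α := ℂ) (R := ℂ)
  exact _root_.tendsto_pow_atTop_nhds_zero_of_spectralRadius_lt_one h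

theorem _root_.Matrix.eq_zero_of_eq_conjTranspose_mul_mul {ι : Type*} [Fintype ι] [DecidableEq ι]
    {M Y : Matrix ι ι ℂ} (h : spectralRadius ℂ M < 1) (hY : Y = Mᴴ * Y * M) : Y = 0 := by
  have hpow : ∀ k : ℕ, Y = (M ^ k)ᴴ * Y * M ^ k := by
    intro k
    induction k with
    | zero => simp
    | succ k ih =>
      calc Y = Mᴴ * ((M ^ k)ᴴ * Y * M ^ k) * M := by rwa [← ih]
        _ = (M ^ (k + 1))ᴴ * Y * M ^ (k + 1) := by
          rw [pow_succ, conjTranspose_mul]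
          simp only [Matrix.mul_assoc]
  have hlim : Tendsto (fun k : ℕ => (M ^ k)ᴴ * Y * M ^ k) atTop
      (𝓝 ((0 : Matrix ι ι ℂ)ᴴ * Y * 0)) :=
    (((continuous_id.matrix_conjTranspose.matrix_mul continuous_const).matrix_mul
      continuous_id).tendsto 0).comp (Matrix.tendsto_pow_atTop_nhds_zero_of_spectralRadius_lt_one h)
  rw [← funext hpow, Matrix.mul_zero] at hlim
  exact tendsto_nhds_unique tendsto_const_nhds hlim

lemma eq_zero_of_cStein_eq_zero {p : ℕ} {C Y : Matrix (Fin p) (Fin p) ℂ}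
    (hρ : spectralRadius ℂ (hatM C) < 1) (hY : CStein C Y = 0) : Y = 0 := by
  rw [CStein, sub_eq_zero] at hY
  refine Matrix.eq_zero_of_eq_conjTranspose_mul_mul hρ ?_
  conv_lhs => rw [hY, hY, mconj_mul, mconj_mul, mconj_mconj, mconj_conjTranspose]
  simp only [hatM, conjTranspose_mul, Matrix.mul_assoc]

def cSteinLinearMap {p : ℕ} (C : Matrix (Fin p) (Fin p) ℂ) :
    Matrix (Fin p) (Fin p) ℂ →ₗ[ℝ] Matrix (Fin p) (Fin p) ℂ where
  toFun := CStein C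
  map_add' X Y := by
    simp only [CStein, mconj_add, Matrix.mul_add, Matrix.add_mul]
    abel
  map_smul' r X := by
    simp only [CStein, mconj_real_smul, Matrix.mul_smul, Matrix.smul_mul, smul_sub,
      RingHom.id_apply]

lemma cStein_bijective {p : ℕ} {C : Matrix (Fin p) (Fin p) ℂ}
    (hρ : spectralRadius ℂ (hatM C) < 1) : Function.Bijective (CStein C) := by
  have hinj : Function.Injective (cSteinLinearMap C) :=
    (injective_iff_map_eq_zero _).mpr fun _ => eq_zero_of_cStein_eq_zero hρ
  exact ⟨hinj, LinearMap.injective_iff_surjective.mp hinj⟩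

lemma conjTranspose_cStein {p : ℕ} (C X : Matrix (Fin p) (Fin p) ℂ) :
    (CStein C X)ᴴ = CStein C Xᴴ := by
  simp only [CStein, conjTranspose_sub, conjTranspose_mul, conjTranspose_conjTranspose,
    mconj_conjTranspose, Matrix.mul_assoc]

lemma isHermitian_HX {A : Matrix (Fin n) (Fin n) ℂ} {B : Matrix (Fin n) (Fin m) ℂ}
    {R : Matrix (Fin m) (Fin m) ℂ} {H : Matrix (Fin n) (Fin n) ℂ} (hR : R.IsHermitian)
    (hH : H.IsHermitian) (X : Matrix (Fin n) (Fin n) ℂ) : (HX A B R H X).IsHermitian :=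
  hH.add (isHermitian_conjTranspose_mul_mul (FX A B R X) hR)

theorem Sge_nonempty_general (n m : ℕ) (A : Matrix (Fin n) (Fin n) ℂ) (B : Matrix (Fin n) (Fin m) ℂ)
    (R : Matrix (Fin m) (Fin m) ℂ) (H : Matrix (Fin n) (Fin n) ℂ)
    (hR : R.IsHermitian) (hH : H.IsHermitian)
    (XT : Matrix (Fin n) (Fin n) ℂ) (hXT : XT.IsHermitian)
    (hRXT : IsUnit (RX R B XT))
    (hρT : spectralRadius ℂ (hatM (TX A B R XT)) < 1) :
    (Sge A B R H).Nonempty ∧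
    ∃ X : Matrix (Fin n) (Fin n) ℂ, X.IsHermitian ∧
      CStein (TX A B R XT) X = HX A B R H XT ∧
      X ∈ Sge A B R H ∧
      ∀ Y : Matrix (Fin n) (Fin n) ℂ, Y.IsHermitian →
        CStein (TX A B R XT) Y = HX A B R H XT → Y = X := by
  have hbij := cStein_bijective hρT
  obtain ⟨X, hX, huniq⟩ := hbij.existsUnique (HX A B R H XT)
  have hXherm : X.IsHermitian :=
    hbij.injective (by rw [← conjTranspose_cStein, hX, (isHermitian_HX hR hH XT).eq])
  have hmem : X ∈ Sge A B R H := by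
    refine ⟨hXherm, XT, hXT, hRXT, hρT, ?_⟩
    rw [hX, sub_self]
    exact .zero
  exact ⟨⟨X, hmem⟩, X, hXherm, hX, hmem, fun Y _ hY => huniq Y hY⟩

/-- If some Hermitian `X_T` has `R_{X_T}` invertible and `ρ(T̂_{X_T}) < 1`, then `S_≥` is
nonempty: the equation `C_{T_{X_T}}(X) = H_{X_T}` has a unique Hermitian solution, which lies
in `S_≥`. -/
theorem Sge_nonempty (n m : ℕ) (A : Matrix (Fin n) (Fin n) ℂ) (B : Matrix (Fin n) (Fin m) ℂ)
    (R : Matrix (Fin m) (Fin m) ℂ) (H : Matrix (Fin n) (Fin n) ℂ)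
    (hR : R.IsHermitian) (hRunit : IsUnit R) (hH : H.IsHermitian)
    (XT : Matrix (Fin n) (Fin n) ℂ) (hXT : XT.IsHermitian)
    (hRXT : IsUnit (RX R B XT))
    (hρT : spectralRadius ℂ (hatM (TX A B R XT)) < 1) :
    (Sge A B R H).Nonempty ∧
    ∃ X : Matrix (Fin n) (Fin n) ℂ, X.IsHermitian ∧
      CStein (TX A B R XT) X = HX A B R H XT ∧
      X ∈ Sge A B R H ∧
      ∀ Y : Matrix (Fin n) (Fin n) ℂ, Y.IsHermitian →
        CStein (TX A B R XT) Y = HX A B R H XT → Y = X :=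
  Sge_nonempty_general n m A B R H hR hH XT hXT hRXT hρT

end CDARE
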